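/- Let G be a simple graph, 1 ≤ t ≤ χ_ℓ(G), and L_t a t-list assignment with λ_{L_t}(G) = λ_t(G). If H is the induced subgraph on the colored vertices of a maximum partial proper coloring of G from L_t (so |V(H)| = λ_t(G)) and λ_t(G) < |V(G)|, then χ_ℓ(H) ≥ t. -/

import Mathlib

open SimpleGraph

/-- `c` properly colors each vertex of `S` from its list `L`. -/
def IsPartialListColoring {V : Type*} (G : SimpleGraph V) (L : V → Finset ℕ)
    (S : Set V) (c : V → ℕ) : Prop :=
  (∀ v ∈ S, c v ∈ L v) ∧ ∀ u ∈ S, ∀ v ∈ S, G.Adj u v → c u ≠ c v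

/-- `λ_L(G)`: the maximum number of vertices properly colorable from the lists of `L`. -/
noncomputable def lamL {V : Type*} (G : SimpleGraph V) (L : V → Finset ℕ) : ℕ :=
  sSup {k | ∃ (S : Finset V) (c : V → ℕ), S.card = k ∧ IsPartialListColoring G L S c}

/-- `λ_t(G)`: the minimum of `λ_L(G)` over all `t`-list assignments `L`. -/
noncomputable def lam {V : Type*} (G : SimpleGraph V) (t : ℕ) : ℕ :=
  sInf {m | ∃ L : V → Finset ℕ, (∀ v, (L v).card = t) ∧ lamL G L = m}

/-- `G` admits a full proper coloring from the lists of `L`. -/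
def ListColorable {V : Type*} (G : SimpleGraph V) (L : V → Finset ℕ) : Prop :=
  ∃ c : V → ℕ, (∀ v, c v ∈ L v) ∧ ∀ u v, G.Adj u v → c u ≠ c v

/-- The list chromatic number of `G`. -/
noncomputable def listChromaticNumber {V : Type*} (G : SimpleGraph V) : ℕ :=
  sInf {k | ∀ L : V → Finset ℕ, (∀ v, (L v).card = k) → ListColorable G L}

/-
If `χ_ℓ(H) < t`, pick an uncolored vertex `w` and a color `x ∈ L w`. Deleting `x` from the lists
of the vertices of `H` leaves lists of size at least `t - 1 ≥ χ_ℓ(H)`, so `H` can be recolored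
avoiding `x`; giving `w` the color `x` then colors `λ_t(G) + 1 = λ_L(G) + 1` vertices from `L`.
-/

section

variable {V : Type*} {G : SimpleGraph V} {L L' : V → Finset ℕ} {S : Set V} {c : V → ℕ}

lemma IsPartialListColoring.mono (h : IsPartialListColoring G L' S c) (hsub : ∀ v, L' v ⊆ L v) :
    IsPartialListColoring G L S c :=
  ⟨fun v hv => hsub v (h.1 v hv), h.2⟩

lemma ListColorable.mono (h : ListColorable G L') (hsub : ∀ v, L' v ⊆ L v) :
    ListColorable G L :=
  let ⟨c, hcL, hcG⟩ := h
  ⟨c, fun v => hsub v (hcL v), hcG⟩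

lemma IsPartialListColoring.insert_update [DecidableEq V] (h : IsPartialListColoring G L S c)
    {w : V} {x : ℕ} (hx : x ∈ L w) (hxS : ∀ v ∈ S, c v ≠ x) :
    IsPartialListColoring G L (insert w S) (Function.update c w x) := by
  refine ⟨fun v hv => ?_, fun u hu v hv huv => ?_⟩
  · rcases eq_or_ne v w with rfl | hvw
    · simpa using hx
    · rw [Function.update_of_ne hvw]
      exact h.1 v (hv.resolve_left hvw)
  · by_cases huw : u = w <;> by_cases hvw : v = w
    · exact absurd huv (huw ▸ hvw ▸ G.irrefl)
    · subst huw
      simpa [hvw] using (hxS v (hv.resolve_left hvw)).symm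
    · subst hvw
      simpa [huw] using hxS u (hu.resolve_left huw)
    · rw [Function.update_of_ne huw, Function.update_of_ne hvw]
      exact h.2 u (hu.resolve_left huw) v (hv.resolve_left hvw) huv

/-- Greedy coloring: each new vertex sees fewer colors on the colored vertices than its list has. -/
lemma exists_isPartialListColoring_of_card_le (G : SimpleGraph V) (L : V → Finset ℕ)
    (S : Finset V) (hS : ∀ v ∈ S, S.card ≤ (L v).card) :
    ∃ c, IsPartialListColoring G L S c := by
  classical
  induction S using Finset.induction with
  | empty => exact ⟨fun _ => 0, by simp [IsPartialListColoring]⟩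
  | @insert a S ha ih =>
    have hcard := Finset.card_insert_of_notMem ha
    obtain ⟨c, hc⟩ := ih fun v hv => by
      have := hS v (Finset.mem_insert_of_mem hv); omega
    have hfew : (S.image c).card < (L a).card := by
      have := hS a (Finset.mem_insert_self a S)
      have := S.card_image_le (f := c)
      omega
    obtain ⟨x, hxL, hxS⟩ := Finset.exists_mem_notMem_of_card_lt_card hfew
    refine ⟨Function.update c a x, ?_⟩
    rw [Finset.coe_insert]
    exact hc.insert_update hxL fun v hv hvx =>
      hxS (hvx ▸ Finset.mem_image_of_mem c (Finset.mem_coe.1 hv))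

lemma listColorable_of_forall_card_le [Fintype V] (G : SimpleGraph V) (L : V → Finset ℕ)
    (hL : ∀ v, Fintype.card V ≤ (L v).card) : ListColorable G L := by
  obtain ⟨c, hcL, hcG⟩ :=
    exists_isPartialListColoring_of_card_le G L Finset.univ fun v _ => hL v
  exact ⟨c, fun v => hcL v (by simp), fun u v => hcG u (by simp) v (by simp)⟩

lemma listColorable_of_listChromaticNumber_le [Finite V] (G : SimpleGraph V) (L : V → Finset ℕ)
    (hL : ∀ v, listChromaticNumber G ≤ (L v).card) : ListColorable G L := by
  have := Fintype.ofFinite V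
  -- `sInf ∅ = 0`: the greedy bound is what makes `listChromaticNumber G` an admissible list size.
  have hχ : listChromaticNumber G ∈
      {k | ∀ L : V → Finset ℕ, (∀ v, (L v).card = k) → ListColorable G L} :=
    Nat.sInf_mem ⟨Fintype.card V, fun L hL => listColorable_of_forall_card_le G L (by simp [hL])⟩
  choose T hTL hTcard using fun v => Finset.exists_subset_card_eq (hL v)
  exact (hχ T hTcard).mono hTL

lemma exists_isPartialListColoring_of_listColorable_induce
    (h : ListColorable (G.induce S) fun v => L v) : ∃ c, IsPartialListColoring G L S c := by
  classical
  obtain ⟨c, hcL, hcG⟩ := h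
  refine ⟨fun v => if hv : v ∈ S then c ⟨v, hv⟩ else 0, fun v hv => ?_, fun u hu v hv huv => ?_⟩
  · simpa [hv] using hcL ⟨v, hv⟩
  · simpa [hu, hv] using hcG ⟨u, hu⟩ ⟨v, hv⟩ huv

lemma IsPartialListColoring.card_le_lamL [Finite V] {S : Finset V}
    (h : IsPartialListColoring G L S c) : S.card ≤ lamL G L := by
  have := Fintype.ofFinite V
  refine le_csSup ⟨Fintype.card V, ?_⟩ ⟨S, c, rfl, h⟩
  rintro _ ⟨T, -, rfl, -⟩
  exact T.card_le_univ

end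

theorem listChromaticNumber_colored_subgraph_ge_general {V : Type*} [Fintype V]
    (G : SimpleGraph V) (t : ℕ)
    (L : V → Finset ℕ) (hLt : ∀ v, (L v).card = t) (hL : lamL G L = lam G t)
    (S : Finset V)
    (hcard : S.card = lam G t) (hlt : lam G t < Fintype.card V) :
    t ≤ listChromaticNumber (G.induce (S : Set V)) := by
  classical
  by_contra! hχ
  obtain ⟨w, -, hwS⟩ := Finset.exists_mem_notMem_of_card_lt_card (s := S) (t := Finset.univ)
    (by rw [Finset.card_univ]; omega)
  obtain ⟨x, hx⟩ : (L w).Nonempty := Finset.card_pos.1 (by rw [hLt]; omega)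
  have hrecolor : ListColorable (G.induce (S : Set V)) fun v => (L v).erase x :=
    listColorable_of_listChromaticNumber_le _ _ fun v => by
      have := Finset.pred_card_le_card_erase (s := L v) (a := x)
      rw [hLt] at this; omega
  obtain ⟨d, hd⟩ :=
    exists_isPartialListColoring_of_listColorable_induce (L := fun v => (L v).erase x) hrecolor
  have hbigger := ((hd.mono fun v => Finset.erase_subset x (L v)).insert_update hx
    fun v hv => Finset.ne_of_mem_erase (hd.1 v hv))
  rw [← Finset.coe_insert] at hbigger
  have := hbigger.card_le_lamL
  rw [Finset.card_insert_of_notMem hwS] at this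
  omega

theorem listChromaticNumber_colored_subgraph_ge {V : Type*} [Fintype V]
    (G : SimpleGraph V) (t : ℕ) (ht : 1 ≤ t) (htχ : t ≤ listChromaticNumber G)
    (L : V → Finset ℕ) (hLt : ∀ v, (L v).card = t) (hL : lamL G L = lam G t)
    (S : Finset V) (c : V → ℕ)
    (hc : IsPartialListColoring G L (S : Set V) c)
    (hcard : S.card = lam G t) (hlt : lam G t < Fintype.card V) :
    t ≤ listChromaticNumber (G.induce (S : Set V)) :=
  listChromaticNumber_colored_subgraph_ge_general G t L hLt hL S hcard hlt
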